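/- Let S be a λ-sparse family of cubes, a ∈ ℤ, and let S_a = {Q ∈ S : 2^a ≤ ⟨σ⟩_Q < 2^{a+1}} for a nonnegative weight σ. If Q* is a maximal cube of S_a, then ∑_{Q ∈ S_a, Q ⊆ Q*} σ(Q) ≤ C(λ) σ(Q*), with C(λ) depending only on the sparseness constant λ. -/

import Mathlib

open MeasureTheory Set
open scoped ENNReal NNReal

noncomputable section

/-- An axis-parallel cube in `ℝ^d`, given by its lower-left corner and (positive) side length. -/
structure Cube (d : ℕ) where
  corner : Fin d → ℝ
  side : ℝ
  side_pos : 0 < side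

namespace Cube

/-- The underlying set of a cube (half-open). -/
def toSet {d : ℕ} (Q : Cube d) : Set (Fin d → ℝ) :=
  Set.univ.pi fun i => Set.Ico (Q.corner i) (Q.corner i + Q.side)

/-- The Lebesgue measure `|Q|` of a cube. -/
def vol {d : ℕ} (Q : Cube d) : ℝ≥0∞ := volume Q.toSet

/-- A cube is dyadic if it has the form `2^{-k}([0,1)^d + n)`, `n ∈ ℤ^d`. -/
def IsDyadic {d : ℕ} (Q : Cube d) : Prop :=
  ∃ k : ℤ, Q.side = 2 ^ (-k) ∧ ∀ i, ∃ n : ℤ, Q.corner i = (n : ℝ) * 2 ^ (-k)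

end Cube

/-- The `σ`-measure `σ(Q) = ∫_Q σ` of a cube. -/
def wt {d : ℕ} (σ : (Fin d → ℝ) → ℝ≥0∞) (Q : Cube d) : ℝ≥0∞ :=
  ∫⁻ x in Q.toSet, σ x

/-- The average `⟨σ⟩_Q = σ(Q)/|Q|` of `σ` over a cube. -/
def avg {d : ℕ} (σ : (Fin d → ℝ) → ℝ≥0∞) (Q : Cube d) : ℝ≥0∞ :=
  wt σ Q / Q.vol

/-- The uncentered Hardy–Littlewood maximal function over cubes. -/
def maximal {d : ℕ} (σ : (Fin d → ℝ) → ℝ≥0∞) (x : Fin d → ℝ) : ℝ≥0∞ :=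
  ⨆ (Q : Cube d) (_ : x ∈ Q.toSet), avg σ Q

/-- The local `A_∞` characteristic `ρ(Q;σ) = σ(Q)⁻¹ ∫_Q M(σ 1_Q)`. -/
def rho {d : ℕ} (σ : (Fin d → ℝ) → ℝ≥0∞) (Q : Cube d) : ℝ≥0∞ :=
  (∫⁻ x in Q.toSet, maximal (Q.toSet.indicator σ) x) / wt σ Q

/-- The sparse set `E_Q = Q \ ⋃ {Q' ∈ S : Q' ⊊ Q}` associated to a cube of a family `S`. -/
def sparseSet {d : ℕ} (S : Set (Cube d)) (Q : Cube d) : Set (Fin d → ℝ) :=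
  Q.toSet \ ⋃ Q' ∈ {Q' ∈ S | Q'.toSet ⊂ Q.toSet}, Q'.toSet

/-- `S` is `λ`-sparse: the sets `E_Q` are pairwise disjoint and `|E_Q| ≥ (1-λ)|Q|`. -/
def IsSparse {d : ℕ} (lam : ℝ≥0∞) (S : Set (Cube d)) : Prop :=
  S.PairwiseDisjoint (sparseSet S) ∧ ∀ Q ∈ S, (1 - lam) * Q.vol ≤ volume (sparseSet S Q)

open Metric Filter
open scoped Topology

lemma cube_meas {d : ℕ} (Q : Cube d) : MeasurableSet Q.toSet :=
  MeasurableSet.univ_pi fun _ => measurableSet_Ico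

lemma cube_vol_eq {d : ℕ} (Q : Cube d) : Q.vol = ENNReal.ofReal Q.side ^ d := by
  simp [Cube.vol, Cube.toSet, volume_pi_pi, Real.volume_Ico]

lemma cube_vol_ne_zero {d : ℕ} (Q : Cube d) : Q.vol ≠ 0 := by
  rw [cube_vol_eq]
  exact pow_ne_zero _ (by simp [ENNReal.ofReal_pos, Q.side_pos] )

lemma cube_vol_ne_top {d : ℕ} (Q : Cube d) : Q.vol ≠ ∞ := by
  rw [cube_vol_eq]
  exact ENNReal.pow_ne_top ENNReal.ofReal_ne_top

lemma nullMeasurable_biUnion_cubes {d : ℕ} (𝒞 : Set (Cube d)) :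
    NullMeasurableSet (⋃ Q ∈ 𝒞, Q.toSet) (volume : Measure (Fin d → ℝ)) := by
  rcases Nat.eq_zero_or_pos d with hd | hd
  · subst hd
    exact (Set.subsingleton_of_subsingleton).measurableSet.nullMeasurableSet
  have : Nonempty (Fin d) := ⟨⟨0, hd⟩⟩
  set U : Set (Fin d → ℝ) := ⋃ Q ∈ 𝒞, Q.toSet with hU
  set V : Set (Fin d → ℝ) := ⋃ Q ∈ 𝒞, interior Q.toSet with hV
  have hVm : MeasurableSet V := (isOpen_biUnion fun Q _ => isOpen_interior).measurableSet
  have hVU : V ⊆ U := iUnion₂_mono fun Q _ => interior_subset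
  have hnull : volume (U \ V) = 0 := by
    have hae := Besicovitch.ae_tendsto_measure_inter_div_of_measurableSet
      (volume : Measure (Fin d → ℝ)) hVm
    rw [Filter.eventually_iff, mem_ae_iff] at hae
    refine measure_mono_null ?_ hae
    intro x hx
    simp only [mem_compl_iff, mem_setOf_eq]
    intro htend
    obtain ⟨hxU, hxV⟩ := hx
    have hind : V.indicator (1 : (Fin d → ℝ) → ℝ≥0∞) x = 0 := indicator_of_notMem hxV _
    rw [hind] at htend
    set c : ℝ≥0∞ := ((2 : ℝ≥0∞) ^ d)⁻¹ with hc
    have hc0 : 0 < c := ENNReal.inv_pos.2 (by simp)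
    have hevlt : ∀ᶠ r in 𝓝[>] (0 : ℝ),
        volume (V ∩ closedBall x r) / volume (closedBall x r) < c :=
      htend.eventually_lt_const hc0
    obtain ⟨Q, hQ𝒞, hxQ⟩ : ∃ Q ∈ 𝒞, x ∈ Q.toSet := by simpa using mem_iUnion₂.1 hxU
    have hxQ' : ∀ i, Q.corner i ≤ x i ∧ x i < Q.corner i + Q.side := by
      intro i
      have := hxQ i (mem_univ i)
      exact ⟨this.1, this.2⟩
    set δ : ℝ := Finset.univ.inf' Finset.univ_nonempty fun i => Q.corner i + Q.side - x i with hδdef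
    have hδpos : 0 < δ := by
      rw [hδdef, Finset.lt_inf'_iff]
      intro i _
      linarith [(hxQ' i).2]
    have hδle : ∀ i, δ ≤ Q.corner i + Q.side - x i := fun i =>
      Finset.inf'_le _ (Finset.mem_univ i)
    have hevge : ∀ᶠ r in 𝓝[>] (0 : ℝ),
        c ≤ volume (V ∩ closedBall x r) / volume (closedBall x r) := by
      filter_upwards [Ioc_mem_nhdsGT_of_mem (⟨le_refl 0, half_pos hδpos⟩ : (0:ℝ) ∈ Ico 0 (δ/2))]
      intro r hr
      obtain ⟨hr0, hrδ⟩ := hr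
      set P : Set (Fin d → ℝ) := Set.univ.pi fun i => Ioo (x i) (x i + r) with hP
      have hPV : P ⊆ V := by
        intro y hy
        refine mem_biUnion hQ𝒞 ?_
        rw [Cube.toSet, interior_pi_set finite_univ]
        intro i _
        have hyi := hy i (mem_univ i)
        simp only [mem_Ioo] at hyi
        simp only [interior_Ico, mem_Ioo]
        have hδi := hδle i
        constructor
        · exact lt_of_le_of_lt (hxQ' i).1 hyi.1
        · linarith [hyi.2]
      have hPB : P ⊆ closedBall x r := by
        intro y hy
        rw [mem_closedBall, dist_pi_le_iff hr0.le]
        intro i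
        have hyi := hy i (mem_univ i)
        simp only [mem_Ioo] at hyi
        rw [Real.dist_eq, abs_le]
        constructor <;> linarith [hyi.1, hyi.2]
      have hvolP : volume P = ENNReal.ofReal r ^ d := by
        simp [hP, volume_pi_pi, Real.volume_Ioo]
      have hvolB : volume (closedBall x r) = (2 * ENNReal.ofReal r) ^ d := by
        rw [closedBall_pi x hr0.le, volume_pi_pi]
        simp [Real.volume_closedBall, ENNReal.ofReal_mul (by norm_num : (0:ℝ) ≤ 2)]
      have hr0' : ENNReal.ofReal r ≠ 0 := by simp [hr0, ENNReal.ofReal_pos.2 hr0, ne_of_gt]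
      have hBne0 : volume (closedBall x r) ≠ 0 := by
        rw [hvolB]; exact pow_ne_zero _ (by simp [hr0'])
      have hBnetop : volume (closedBall x r) ≠ ∞ := by
        rw [hvolB]
        exact ENNReal.pow_ne_top (ENNReal.mul_ne_top (by norm_num) ENNReal.ofReal_ne_top)
      rw [ENNReal.le_div_iff_mul_le (Or.inl hBne0) (Or.inl hBnetop)]
      calc c * volume (closedBall x r) = ((2:ℝ≥0∞)^d)⁻¹ * ((2:ℝ≥0∞)^d * ENNReal.ofReal r ^ d) := by
            rw [hvolB, mul_pow]
        _ = ENNReal.ofReal r ^ d := by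
            rw [← mul_assoc, ENNReal.inv_mul_cancel (by simp) (by simp), one_mul]
        _ = volume P := hvolP.symm
        _ ≤ volume (V ∩ closedBall x r) := measure_mono (subset_inter hPV hPB)
    obtain ⟨r, hlt, hge⟩ := (hevlt.and hevge).exists
    exact absurd hge (not_le.2 hlt)
  have : U = V ∪ (U \ V) := (union_diff_cancel hVU).symm
  rw [this]
  exact hVm.nullMeasurableSet.union (NullMeasurableSet.of_null hnull)

lemma sparseSet_nullMeasurable {d : ℕ} (S : Set (Cube d)) (Q : Cube d) :
    NullMeasurableSet (sparseSet S Q) (volume : Measure (Fin d → ℝ)) :=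
  (cube_meas Q).nullMeasurableSet.diff (nullMeasurable_biUnion_cubes _)

/-- for `S_a = {Q ∈ S : 2^a ≤ ⟨σ⟩_Q < 2^{a+1}}` and `Q*` a maximal cube of
`S_a`, one has `∑_{Q ∈ S_a, Q ⊆ Q*} σ(Q) ≤ C(λ) σ(Q*)`. -/
theorem statement8 (lam : ℝ≥0∞) (hlam0 : 0 < lam) (hlam1 : lam < 1) :
    ∃ C : ℝ≥0∞, C ≠ ∞ ∧
      ∀ (d : ℕ) (S : Set (Cube d)), IsSparse lam S →
        ∀ (σ : (Fin d → ℝ) → ℝ≥0∞), Measurable σ →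
          ∀ a : ℤ,
            ∀ Sa : Set (Cube d),
              Sa = {Q ∈ S | (2 : ℝ≥0∞) ^ a ≤ avg σ Q ∧ avg σ Q < (2 : ℝ≥0∞) ^ (a + 1)} →
              ∀ Qstar ∈ Sa, (∀ Q ∈ Sa, ¬ Qstar.toSet ⊂ Q.toSet) →
                (∑' Q : {Q : Cube d // Q ∈ Sa ∧ Q.toSet ⊆ Qstar.toSet}, wt σ (Q : Cube d))
                  ≤ C * wt σ Qstar := by
  have h1lam0 : (1 : ℝ≥0∞) - lam ≠ 0 := by
    simp only [ne_eq, tsub_eq_zero_iff_le, not_le]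
    exact hlam1
  have h1lamtop : (1 : ℝ≥0∞) - lam ≠ ∞ := by
    exact ne_top_of_le_ne_top ENNReal.one_ne_top tsub_le_self
  refine ⟨2 * (1 - lam)⁻¹, ENNReal.mul_ne_top (by norm_num) (ENNReal.inv_ne_top.2 h1lam0), ?_⟩
  intro d S hS σ hσ a Sa hSa Qstar hQstar hmax
  have two_ne_zero' : (2 : ℝ≥0∞) ≠ 0 := by norm_num
  have two_ne_top' : (2 : ℝ≥0∞) ≠ ∞ := by norm_num
  -- facts about cubes in Sa
  have hmem : ∀ Q ∈ Sa, Q ∈ S ∧ (2 : ℝ≥0∞) ^ a ≤ avg σ Q ∧ avg σ Q < (2 : ℝ≥0∞) ^ (a + 1) := by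
    intro Q hQ; rw [hSa] at hQ; exact hQ
  have h1 : ∀ Q ∈ Sa, wt σ Q ≤ 2 ^ (a + 1) * Q.vol := by
    intro Q hQ
    have := (hmem Q hQ).2.2
    rw [avg, ENNReal.div_lt_iff (Or.inl (cube_vol_ne_zero Q)) (Or.inl (cube_vol_ne_top Q))] at this
    exact this.le
  have h2 : ∀ Q ∈ S, Q.vol ≤ (1 - lam)⁻¹ * volume (sparseSet S Q) := by
    intro Q hQ
    have := hS.2 Q hQ
    calc Q.vol = (1 - lam)⁻¹ * ((1 - lam) * Q.vol) := by
          rw [← mul_assoc, ENNReal.inv_mul_cancel h1lam0 h1lamtop, one_mul]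
      _ ≤ (1 - lam)⁻¹ * volume (sparseSet S Q) := mul_le_mul_right this _
  have h3 : Qstar.vol ≤ 2 ^ (-a) * wt σ Qstar := by
    have hle : (2 : ℝ≥0∞) ^ a ≤ avg σ Qstar := (hmem Qstar hQstar).2.1
    rw [avg, ENNReal.le_div_iff_mul_le (Or.inl (cube_vol_ne_zero Qstar))
      (Or.inl (cube_vol_ne_top Qstar))] at hle
    calc Qstar.vol = 2 ^ (-a) * (2 ^ a * Qstar.vol) := by
          rw [← mul_assoc, ← ENNReal.zpow_add two_ne_zero' two_ne_top', neg_add_cancel, zpow_zero,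
            one_mul]
      _ ≤ 2 ^ (-a) * wt σ Qstar := mul_le_mul_right hle _
  refine Summable.tsum_le_of_sum_le ENNReal.summable ?_
  intro F
  have hdisj : (↑F : Set {Q : Cube d // Q ∈ Sa ∧ Q.toSet ⊆ Qstar.toSet}).Pairwise
      (Function.onFun (AEDisjoint volume) fun Q => sparseSet S Q.1) := by
    intro i _ j _ hij
    exact (hS.1 (hmem i.1 i.2.1).1 (hmem j.1 j.2.1).1
      (fun h => hij (Subtype.ext h))).aedisjoint
  calc ∑ Q ∈ F, wt σ (Q : Cube d)
      ≤ ∑ Q ∈ F, 2 ^ (a + 1) * ((1 - lam)⁻¹ * volume (sparseSet S Q.1)) := by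
        refine Finset.sum_le_sum fun Q _ => ?_
        exact (h1 Q.1 Q.2.1).trans (mul_le_mul_right (h2 Q.1 (hmem Q.1 Q.2.1).1) _)
    _ = 2 ^ (a + 1) * (1 - lam)⁻¹ * volume (⋃ Q ∈ F, sparseSet S Q.1) := by
        rw [measure_biUnion_finset₀ hdisj (fun Q _ => sparseSet_nullMeasurable S Q.1),
          Finset.mul_sum]
        simp [mul_assoc]
    _ ≤ 2 ^ (a + 1) * (1 - lam)⁻¹ * Qstar.vol := by
        refine mul_le_mul_right (measure_mono ?_) _
        refine iUnion₂_subset fun Q _ => ?_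
        exact Set.diff_subset.trans Q.2.2
    _ ≤ 2 ^ (a + 1) * (1 - lam)⁻¹ * (2 ^ (-a) * wt σ Qstar) := mul_le_mul_right h3 _
    _ = 2 * (1 - lam)⁻¹ * wt σ Qstar := by
        rw [show (2:ℝ≥0∞) ^ (a+1) * (1-lam)⁻¹ * (2 ^ (-a) * wt σ Qstar)
            = (2 ^ (a+1) * 2 ^ (-a)) * ((1-lam)⁻¹ * wt σ Qstar) by ring,
          ← ENNReal.zpow_add two_ne_zero' two_ne_top']
        rw [show a + 1 + -a = 1 by ring, zpow_one, mul_assoc]
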